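/- arXiv:2306.06821 — 11 statements merged into one kernel-verified Lean document; each statement's English description precedes it below -/
import Mathlib

section
/- Let P be a normal logic program over n atoms with m rules, let (D, Q) be its matricized form, let I be a model and u_I its vectorized model. Then for every rule index j, the j-th entry of the vector Q(1 − u_I^δ) equals the number of body literals of rule j that are false in I, namely |pos(j) \ I| + |neg(j) ∩ I|; consequently (min₁(Q(1 − u_I^δ)))(j) = 0 if and only if I satisfies the body of rule j. -/
open Finset Matrix

noncomputable section

/-- componentwise `x ↦ min x 1` -/
def min1 {k : Type*} (v : k → ℝ) : k → ℝ := fun j => min (v j) 1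

/-- the vectorized model `u_I ∈ {0,1}^n` of a model `I` -/
def vecI {n : ℕ} (I : Finset (Fin n)) : Fin n → ℝ := fun i => if i ∈ I then 1 else 0

/-- the dualized vector `u^δ = [u ; 1-u] ∈ ℝ^{2n}` -/
def dvec {n : ℕ} (u : Fin n → ℝ) : Fin n ⊕ Fin n → ℝ := Sum.elim u fun i => 1 - u i

/-- the matrix `D ∈ ℝ^{n×m}` of the matricized program: `D(i,j) = 1` iff `h j = i` -/
def Dmat {n m : ℕ} (hd : Fin m → Fin n) : Matrix (Fin n) (Fin m) ℝ :=
  Matrix.of fun i j => if hd j = i then 1 else 0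

/-- the matrix `Q = [Q¹ Q²] ∈ ℝ^{m×2n}` of the matricized program -/
def Qmat {n m : ℕ} (pos neg : Fin m → Finset (Fin n)) :
    Matrix (Fin m) (Fin n ⊕ Fin n) ℝ :=
  Matrix.of fun j => Sum.elim (fun i => if i ∈ pos j then (1 : ℝ) else 0)
    (fun i => if i ∈ neg j then (1 : ℝ) else 0)

/-- a half of the matrix `Q`: `Qhalf pos = Q¹`, `Qhalf neg = Q²` -/
def Qhalf {n m : ℕ} (b : Fin m → Finset (Fin n)) : Matrix (Fin m) (Fin n) ℝ :=
  Matrix.of fun j i => if i ∈ b j then 1 else 0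

/-- `I` satisfies the body of rule `j` -/
def bodyTrue {n m : ℕ} (pos neg : Fin m → Finset (Fin n)) (I : Finset (Fin n))
    (j : Fin m) : Prop :=
  pos j ⊆ I ∧ neg j ∩ I = ∅

instance {n m : ℕ} (pos neg : Fin m → Finset (Fin n)) (I : Finset (Fin n)) :
    DecidablePred (bodyTrue pos neg I) := fun j =>
  inferInstanceAs (Decidable (pos j ⊆ I ∧ neg j ∩ I = ∅))

/-- `I` is a supported model of the program -/
def isSupported {n m : ℕ} (hd : Fin m → Fin n) (pos neg : Fin m → Finset (Fin n))
    (I : Finset (Fin n)) : Prop :=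
  ∀ i, i ∈ I ↔ ∃ j, hd j = i ∧ bodyTrue pos neg I j

/-- the Euclidean norm `‖·‖₂` on `ℝ^k` -/
def euclidNorm {k : Type*} [Fintype k] (v : k → ℝ) : ℝ := Real.sqrt (∑ i, v i ^ 2)

/-- the vector `d = D(1 - min₁(Q(1 - u^δ)))` -/
def dvecOf {n m : ℕ} (hd : Fin m → Fin n) (pos neg : Fin m → Finset (Fin n))
    (u : Fin n → ℝ) : Fin n → ℝ :=
  (Dmat hd).mulVec fun j => 1 - min1 ((Qmat pos neg).mulVec fun x => 1 - dvec u x) j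

/-- the `j`-th entry of `Q(1 - u_I^δ)` counts the body literals of rule `j`
false in `I`, namely `|pos(j) \ I| + |neg(j) ∩ I|`; consequently
`(min₁(Q(1 - u_I^δ)))(j) = 0` iff `I` satisfies the body of rule `j`. -/
theorem stmt0 {n m : ℕ} (hd : Fin m → Fin n) (pos neg : Fin m → Finset (Fin n))
    (I : Finset (Fin n)) (j : Fin m) :
    ((Qmat pos neg).mulVec fun x => 1 - dvec (vecI I) x) j
        = ((pos j \ I).card : ℝ) + ((neg j ∩ I).card : ℝ) ∧
    (min1 ((Qmat pos neg).mulVec fun x => 1 - dvec (vecI I) x) j = 0 ↔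
      bodyTrue pos neg I j) := by
  have key : ((Qmat pos neg).mulVec fun x => 1 - dvec (vecI I) x) j
      = ((pos j \ I).card : ℝ) + ((neg j ∩ I).card : ℝ) := by
    simp only [Matrix.mulVec, dotProduct, Qmat, Matrix.of_apply, dvec, vecI,
      Fintype.sum_sum_type, Sum.elim_inl, Sum.elim_inr]
    have h1 : ∑ i : Fin n, (if i ∈ pos j then (1:ℝ) else 0) *
        (1 - if i ∈ I then (1:ℝ) else 0) = ((pos j \ I).card : ℝ) := by
      have : ((pos j \ I).card : ℝ) = ∑ i : Fin n, if i ∈ pos j \ I then 1 else 0 := by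
        simp
        congr 1
        ext x
        simp [Finset.mem_sdiff]
      rw [this]
      refine Finset.sum_congr rfl fun i _ => ?_
      by_cases h1 : i ∈ pos j <;> by_cases h2 : i ∈ I <;>
        simp [h1, h2, Finset.mem_sdiff]
    have h2 : ∑ i : Fin n, (if i ∈ neg j then (1:ℝ) else 0) *
        (1 - (1 - if i ∈ I then (1:ℝ) else 0)) = ((neg j ∩ I).card : ℝ) := by
      have : ((neg j ∩ I).card : ℝ) = ∑ i : Fin n, if i ∈ neg j ∩ I then 1 else 0 := by
        simp
        congr 1
        ext x
        simp [Finset.mem_inter]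
      rw [this]
      refine Finset.sum_congr rfl fun i _ => ?_
      by_cases h1 : i ∈ neg j <;> by_cases h2 : i ∈ I <;>
        simp [h1, h2, Finset.mem_inter]
    rw [h1, h2]
  refine ⟨key, ?_⟩
  rw [min1, key]
  constructor
  · intro h
    have hle : (0:ℝ) ≤ ((pos j \ I).card : ℝ) + ((neg j ∩ I).card : ℝ) := by positivity
    rcases lt_or_ge (((pos j \ I).card : ℝ) + ((neg j ∩ I).card : ℝ)) 1 with hlt | hge
    · rw [min_eq_left hlt.le] at h
      have c1 : ((pos j \ I).card : ℝ) = 0 := by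
        linarith [Nat.cast_nonneg (α := ℝ) (pos j \ I).card,
          Nat.cast_nonneg (α := ℝ) (neg j ∩ I).card]
      have c2 : ((neg j ∩ I).card : ℝ) = 0 := by
        linarith [Nat.cast_nonneg (α := ℝ) (pos j \ I).card,
          Nat.cast_nonneg (α := ℝ) (neg j ∩ I).card]
      have c1' : (pos j \ I).card = 0 := by exact_mod_cast c1
      have c2' : (neg j ∩ I).card = 0 := by exact_mod_cast c2
      exact ⟨Finset.sdiff_eq_empty_iff_subset.mp (Finset.card_eq_zero.mp c1'),
        Finset.card_eq_zero.mp c2'⟩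
    · rw [min_eq_right hge] at h; norm_num at h
  · rintro ⟨h1, h2⟩
    rw [Finset.sdiff_eq_empty_iff_subset.mpr h1, h2]
    simp
end
end

section
/- Let P be a normal logic program over n atoms with m rules, let (D, Q) be its matricized form, let I be a model, u_I its vectorized model, and d_I = D(1 − min₁(Q(1 − u_I^δ))). Then for every atom i, the i-th entry d_I(i) equals the number of rules j with h(j) = i whose body is satisfied by I. -/
open Finset Matrix

noncomputable section

lemma keyQ {n m : ℕ} (pos neg : Fin m → Finset (Fin n)) (I : Finset (Fin n)) (j : Fin m) :
    ((Qmat pos neg).mulVec fun x => 1 - dvec (vecI I) x) j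
      = ((pos j \ I).card : ℝ) + ((neg j ∩ I).card : ℝ) := by
  simp only [Matrix.mulVec, dotProduct, Fintype.sum_sum_type, Qmat, Matrix.of_apply,
    Sum.elim_inl, Sum.elim_inr, dvec, vecI]
  have h1 : ∀ x : Fin n,
      (if x ∈ pos j then (1:ℝ) else 0) * (1 - if x ∈ I then (1:ℝ) else 0)
        = if x ∈ pos j \ I then 1 else 0 := by
    intro x; simp only [Finset.mem_sdiff]; split_ifs <;> simp_all
  have h2 : ∀ x : Fin n,
      (if x ∈ neg j then (1:ℝ) else 0) * (1 - (1 - if x ∈ I then (1:ℝ) else 0))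
        = if x ∈ neg j ∩ I then 1 else 0 := by
    intro x; simp only [Finset.mem_inter]; split_ifs <;> simp_all
  rw [Finset.sum_congr rfl (fun x _ => h1 x), Finset.sum_congr rfl (fun x _ => h2 x)]
  simp only [Finset.sum_boole]
  rw [Finset.filter_univ_mem, Finset.filter_univ_mem]

lemma keyB {n m : ℕ} (pos neg : Fin m → Finset (Fin n)) (I : Finset (Fin n)) (j : Fin m) :
    1 - min1 ((Qmat pos neg).mulVec fun x => 1 - dvec (vecI I) x) j
      = if bodyTrue pos neg I j then (1:ℝ) else 0 := by
  rw [min1, keyQ]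
  have hb : bodyTrue pos neg I j ↔ (pos j \ I) = ∅ ∧ (neg j ∩ I) = ∅ := by
    unfold bodyTrue
    rw [Finset.sdiff_eq_empty_iff_subset]
  by_cases h : bodyTrue pos neg I j
  · rw [if_pos h]
    rw [hb] at h
    simp [h.1, h.2]
  · rw [hb] at h
    have : 1 ≤ ((pos j \ I).card : ℝ) + ((neg j ∩ I).card : ℝ) := by
      have : 1 ≤ (pos j \ I).card + (neg j ∩ I).card := by
        by_contra hc
        push_neg at hc
        interval_cases h' : (pos j \ I).card + (neg j ∩ I).card
        · exact h ⟨Finset.card_eq_zero.mp (Nat.eq_zero_of_add_eq_zero_right h'),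
            Finset.card_eq_zero.mp (Nat.eq_zero_of_add_eq_zero_left h')⟩
      exact_mod_cast this
    rw [min_eq_right this, if_neg (fun hh => h (hb.mp hh))]
    ring

/-- the `i`-th entry of `d_I = D(1 - min₁(Q(1 - u_I^δ)))` equals the number
of rules `j` with head `i` whose body is satisfied by `I`. -/
theorem stmt1 {n m : ℕ} (hd : Fin m → Fin n) (pos neg : Fin m → Finset (Fin n))
    (I : Finset (Fin n)) (i : Fin n) :
    dvecOf hd pos neg (vecI I) i
      = ((Finset.univ.filter fun j => hd j = i ∧ bodyTrue pos neg I j).card : ℝ) := by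
  unfold dvecOf
  simp only [Matrix.mulVec, dotProduct, Dmat, Matrix.of_apply]
  rw [Finset.sum_congr rfl (fun j _ => by rw [keyB pos neg I j])]
  have : ∀ j : Fin m, (if hd j = i then (1:ℝ) else 0) * (if bodyTrue pos neg I j then 1 else 0)
      = if hd j = i ∧ bodyTrue pos neg I j then 1 else 0 := by
    intro j; split_ifs <;> simp_all
  rw [Finset.sum_congr rfl (fun j _ => this j)]
  simp [Finset.sum_boole]
end
end

section
/- (Proposition 1) Let P be a normal logic program over n atoms with m rules, (D, Q) its matricized form, I a model, u_I its vectorized model, and d_I = D(1 − min₁(Q(1 − u_I^δ))). Then I is a supported model of P if and only if ‖u_I − min₁(d_I)‖₂ = 0, where ‖·‖₂ is the Euclidean norm on ℝ^n. -/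
open Finset Matrix

noncomputable section

lemma auxQ {n m : ℕ} (pos neg : Fin m → Finset (Fin n)) (I : Finset (Fin n)) (j : Fin m) :
    (Qmat pos neg).mulVec (fun x => 1 - dvec (vecI I) x) j
      = ((pos j \ I).card + (neg j ∩ I).card : ℝ) := by
  have e1 : ∀ i : Fin n, (if i ∈ pos j then (1:ℝ) else 0) * (1 - (if i ∈ I then 1 else 0))
      = if i ∈ pos j \ I then 1 else 0 := by
    intro i; by_cases h1 : i ∈ pos j <;> by_cases h2 : i ∈ I <;> simp [h1, h2]
  have e2 : ∀ i : Fin n, (if i ∈ neg j then (1:ℝ) else 0) * (1 - (1 - (if i ∈ I then 1 else 0)))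
      = if i ∈ neg j ∩ I then 1 else 0 := by
    intro i; by_cases h1 : i ∈ neg j <;> by_cases h2 : i ∈ I <;> simp [h1, h2]
  simp only [Matrix.mulVec, dotProduct, Qmat, Matrix.of_apply, Fintype.sum_sum_type,
    Sum.elim_inl, Sum.elim_inr, dvec, vecI, e1, e2, Finset.sum_boole]
  rw [Finset.filter_mem_eq_inter, Finset.filter_mem_eq_inter, Finset.univ_inter,
    Finset.univ_inter]

lemma auxB {n m : ℕ} (pos neg : Fin m → Finset (Fin n)) (I : Finset (Fin n)) (j : Fin m) :
    1 - min1 ((Qmat pos neg).mulVec fun x => 1 - dvec (vecI I) x) j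
      = if bodyTrue pos neg I j then 1 else 0 := by
  rw [min1, auxQ]
  by_cases h : bodyTrue pos neg I j
  · obtain ⟨h1, h2⟩ := h
    rw [Finset.sdiff_eq_empty_iff_subset.mpr h1, h2]
    simp [bodyTrue, h1, h2]
  · have hge : (1:ℝ) ≤ ((pos j \ I).card + (neg j ∩ I).card : ℝ) := by
      have h0 : (0:ℝ) ≤ ((pos j \ I).card : ℝ) := Nat.cast_nonneg _
      have h0' : (0:ℝ) ≤ ((neg j ∩ I).card : ℝ) := Nat.cast_nonneg _
      have hc : pos j \ I ≠ ∅ ∨ neg j ∩ I ≠ ∅ := by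
        by_contra hc
        push_neg at hc
        exact h ⟨Finset.sdiff_eq_empty_iff_subset.mp hc.1, hc.2⟩
      rcases hc with hc | hc
      · have : (1:ℝ) ≤ ((pos j \ I).card : ℝ) := by
          exact_mod_cast Finset.card_pos.mpr (Finset.nonempty_iff_ne_empty.mpr hc)
        linarith
      · have : (1:ℝ) ≤ ((neg j ∩ I).card : ℝ) := by
          exact_mod_cast Finset.card_pos.mpr (Finset.nonempty_iff_ne_empty.mpr hc)
        linarith
    rw [min_eq_right hge]
    simp [h]

lemma auxD {n m : ℕ} (hd : Fin m → Fin n) (pos neg : Fin m → Finset (Fin n))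
    (I : Finset (Fin n)) (i : Fin n) :
    min1 (dvecOf hd pos neg (vecI I)) i
      = if (∃ j, hd j = i ∧ bodyTrue pos neg I j) then 1 else 0 := by
  have hD : dvecOf hd pos neg (vecI I) i
      = ((Finset.univ.filter fun j => hd j = i ∧ bodyTrue pos neg I j).card : ℝ) := by
    simp only [dvecOf, Matrix.mulVec, dotProduct, Dmat, Matrix.of_apply]
    have e : ∀ j : Fin m,
        (if hd j = i then (1:ℝ) else 0) *
          (1 - min1 ((Qmat pos neg).mulVec fun x => 1 - dvec (vecI I) x) j)
        = if hd j = i ∧ bodyTrue pos neg I j then 1 else 0 := by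
      intro j
      rw [auxB]
      by_cases h1 : hd j = i <;> by_cases h2 : bodyTrue pos neg I j <;> simp [h1, h2]
    simp only [e, Finset.sum_boole]
  rw [min1, hD]
  by_cases h : ∃ j, hd j = i ∧ bodyTrue pos neg I j
  · have : (Finset.univ.filter fun j => hd j = i ∧ bodyTrue pos neg I j).Nonempty := by
      obtain ⟨j, hj⟩ := h
      exact ⟨j, by simp [hj]⟩
    have : (1:ℝ) ≤ ((Finset.univ.filter fun j => hd j = i ∧ bodyTrue pos neg I j).card : ℝ) := by
      exact_mod_cast Finset.card_pos.mpr this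
    rw [min_eq_right this]
    simp [h]
  · have : (Finset.univ.filter fun j => hd j = i ∧ bodyTrue pos neg I j) = ∅ := by
      apply Finset.filter_eq_empty_iff.mpr
      intro j _
      exact fun hj => h ⟨j, hj⟩
    rw [this]
    simp [h]

/-- Proposition 1: `I` is a supported model of `P` iff
`‖u_I - min₁(d_I)‖₂ = 0`. -/
theorem stmt2 {n m : ℕ} (hd : Fin m → Fin n) (pos neg : Fin m → Finset (Fin n))
    (I : Finset (Fin n)) :
    isSupported hd pos neg I ↔
      euclidNorm (fun i => vecI I i - min1 (dvecOf hd pos neg (vecI I)) i) = 0 := by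
  have hnorm : ∀ (v : Fin n → ℝ), euclidNorm v = 0 ↔ ∀ i, v i = 0 := by
    intro v
    rw [euclidNorm, Real.sqrt_eq_zero (Finset.sum_nonneg fun i _ => sq_nonneg _),
      Finset.sum_eq_zero_iff_of_nonneg fun i _ => sq_nonneg _]
    simp [pow_eq_zero_iff]
  rw [hnorm]
  constructor
  · intro hs i
    rw [auxD, sub_eq_zero, vecI]
    by_cases h : i ∈ I
    · simp [h, (hs i).mp h]
    · simp only [h, if_false]
      have : ¬ ∃ j, hd j = i ∧ bodyTrue pos neg I j := fun he => h ((hs i).mpr he)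
      simp [this]
  · intro hz i
    have := hz i
    rw [auxD, sub_eq_zero, vecI] at this
    constructor
    · intro h
      simp only [h, if_true] at this
      by_contra he
      simp [he] at this
    · intro he
      by_contra h
      simp [h, he] at this
end
end

section
/- Let P be a normal logic program over n atoms with m rules, (D, Q) its matricized form with Q = [Q¹ Q²], I a model and u_I its vectorized model. Define M² = 1 − min₁(Q² u_I), M¹ = M² ⊙ (1 − min₁(Q¹(1 − u_I))) (componentwise product), d_I⁺ = D M¹, and d_I = D(1 − min₁(Q(1 − u_I^δ))). Then d_I = d_I⁺. -/
open Finset Matrix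

noncomputable section

private lemma zero_or_one_sum {k : Type*} [Fintype k] (f : k → ℝ)
    (h : ∀ i, f i = 0 ∨ f i = 1) : (∑ i, f i) = 0 ∨ 1 ≤ ∑ i, f i := by
  by_cases hz : ∀ i, f i = 0
  · left; simp [hz]
  · right
    push_neg at hz
    obtain ⟨i, hi⟩ := hz
    have h1 : f i = 1 := (h i).resolve_left hi
    calc (1:ℝ) = f i := h1.symm
      _ ≤ ∑ j, f j := Finset.single_le_sum (fun j _ => by rcases h j with h|h <;> simp [h]) (Finset.mem_univ i)

private lemma key (a b : ℝ) (ha : a = 0 ∨ 1 ≤ a) (hb : b = 0 ∨ 1 ≤ b) :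
    1 - min (a + b) 1 = (1 - min b 1) * (1 - min a 1) := by
  rcases ha with ha | ha <;> rcases hb with hb | hb
  · simp [ha, hb]
  · rw [ha]; rw [min_eq_right hb, min_eq_right (by linarith)]; ring
  · rw [hb]; rw [min_eq_right ha, min_eq_right (by linarith)]; ring
  · rw [min_eq_right ha, min_eq_right hb, min_eq_right (by linarith)]; ring

/-- with `M² = 1 - min₁(Q² u_I)`, `M¹ = M² ⊙ (1 - min₁(Q¹(1 - u_I)))`,
`d_I⁺ = D M¹` and `d_I = D(1 - min₁(Q(1 - u_I^δ)))`, we have `d_I = d_I⁺`. -/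
theorem stmt3 {n m : ℕ} (hd : Fin m → Fin n) (pos neg : Fin m → Finset (Fin n))
    (I : Finset (Fin n)) :
    dvecOf hd pos neg (vecI I)
      = (Dmat hd).mulVec fun j =>
          (1 - min1 ((Qhalf neg).mulVec (vecI I)) j) *
            (1 - min1 ((Qhalf pos).mulVec fun i => 1 - vecI I i) j) := by
  unfold dvecOf
  refine congrArg (Dmat hd).mulVec ?_
  funext j
  unfold min1 Qmat Qhalf dvec vecI
  simp only [Matrix.mulVec, Matrix.of_apply, dotProduct, Fintype.sum_sum_type,
    Sum.elim_inl, Sum.elim_inr]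
  simp only [sub_sub_cancel]
  set A : ℝ := ∑ i, (if i ∈ pos j then (1:ℝ) else 0) * (1 - if i ∈ I then (1:ℝ) else 0) with hA
  set B : ℝ := ∑ i, (if i ∈ neg j then (1:ℝ) else 0) * (if i ∈ I then (1:ℝ) else 0) with hB
  have hA01 : A = 0 ∨ 1 ≤ A := by
    apply zero_or_one_sum
    intro i; by_cases h1 : i ∈ pos j <;> by_cases h2 : i ∈ I <;> simp [h1, h2]
  have hB01 : B = 0 ∨ 1 ≤ B := by
    apply zero_or_one_sum
    intro i; by_cases h1 : i ∈ neg j <;> by_cases h2 : i ∈ I <;> simp [h1, h2]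
  exact key A B hA01 hB01
end
end

section
/- (Proposition 3) Let P be a normal logic program over n atoms with m rules and (D, Q) its matricized form, and fix ℓ₂ > 0. For u ∈ ℝ^n let d = D(1 − min₁(Q(1 − u^δ))) and J_SU(u) = 0.5·(‖u − min₁(d)‖₂² + ℓ₂·‖u ⊙ (1 − u)‖₂²). Then J_SU(u) = 0 if and only if u ∈ {0,1}^n and the model I = {i | u(i) = 1} is a supported model of P. -/
open Finset Matrix

noncomputable section

/-- the cost function `J_SU` -/
def JSU {n m : ℕ} (hd : Fin m → Fin n) (pos neg : Fin m → Finset (Fin n)) (ℓ₂ : ℝ)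
    (u : Fin n → ℝ) : ℝ :=
  0.5 * (euclidNorm (fun i => u i - min1 (dvecOf hd pos neg u) i) ^ 2
    + ℓ₂ * euclidNorm (fun i => u i * (1 - u i)) ^ 2)

lemma sq_euclid {k : Type*} [Fintype k] (v : k → ℝ) :
    euclidNorm v ^ 2 = ∑ i, v i ^ 2 := by
  rw [euclidNorm, Real.sq_sqrt]; positivity

lemma euclid_sq_eq_zero {k : Type*} [Fintype k] (v : k → ℝ) :
    euclidNorm v ^ 2 = 0 ↔ ∀ i, v i = 0 := by
  rw [sq_euclid, Finset.sum_eq_zero_iff_of_nonneg (fun i _ => by positivity)]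
  simp [pow_eq_zero_iff]

lemma JSU_eq_zero_iff {n m : ℕ} (hd : Fin m → Fin n) (pos neg : Fin m → Finset (Fin n))
    (ℓ₂ : ℝ) (hℓ₂ : 0 < ℓ₂) (u : Fin n → ℝ) :
    JSU hd pos neg ℓ₂ u = 0 ↔
      (∀ i, u i = min1 (dvecOf hd pos neg u) i) ∧ ∀ i, u i = 0 ∨ u i = 1 := by
  have hA : (0:ℝ) ≤ euclidNorm (fun i => u i - min1 (dvecOf hd pos neg u) i) ^ 2 := by
    positivity
  have hB : (0:ℝ) ≤ euclidNorm (fun i => u i * (1 - u i)) ^ 2 := by positivity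
  unfold JSU
  constructor
  · intro h
    have h' : euclidNorm (fun i => u i - min1 (dvecOf hd pos neg u) i) ^ 2
        + ℓ₂ * euclidNorm (fun i => u i * (1 - u i)) ^ 2 = 0 := by linarith
    have hB' : (0:ℝ) ≤ ℓ₂ * euclidNorm (fun i => u i * (1 - u i)) ^ 2 := by positivity
    have h1 : euclidNorm (fun i => u i - min1 (dvecOf hd pos neg u) i) ^ 2 = 0 := by
      linarith
    have h2 : euclidNorm (fun i => u i * (1 - u i)) ^ 2 = 0 := by nlinarith
    rw [euclid_sq_eq_zero] at h1 h2
    refine ⟨fun i => by linarith [h1 i], fun i => ?_⟩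
    rcases mul_eq_zero.1 (h2 i) with h | h
    · exact Or.inl h
    · exact Or.inr (by linarith)
  · rintro ⟨h1, h2⟩
    have e1 : euclidNorm (fun i => u i - min1 (dvecOf hd pos neg u) i) ^ 2 = 0 := by
      rw [euclid_sq_eq_zero]; intro i; rw [h1 i]; ring
    have e2 : euclidNorm (fun i => u i * (1 - u i)) ^ 2 = 0 := by
      rw [euclid_sq_eq_zero]; intro i
      rcases h2 i with h | h <;> rw [h] <;> ring
    rw [e1, e2]; ring

lemma key_s5 {n m : ℕ} (hd : Fin m → Fin n) (pos neg : Fin m → Finset (Fin n))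
    (u : Fin n → ℝ) (h01 : ∀ i, u i = 0 ∨ u i = 1) (i : Fin n) :
    min1 (dvecOf hd pos neg u) i =
      if ∃ j, hd j = i ∧ bodyTrue pos neg (Finset.univ.filter fun i => u i = 1) j
      then 1 else 0 := by
  set I := Finset.univ.filter fun i => u i = 1 with hI
  have hmemI : ∀ i, i ∈ I ↔ u i = 1 := by
    intro i; simp [hI]
  have hw : ∀ j, ((Qmat pos neg).mulVec fun x => 1 - dvec u x) j
      = ∑ i ∈ pos j, (1 - u i) + ∑ i ∈ neg j, u i := by
    intro j
    simp only [Matrix.mulVec, dotProduct, Qmat, dvec, Matrix.of_apply,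
      Fintype.sum_sum_type, Sum.elim_inl, Sum.elim_inr, ite_mul, one_mul, zero_mul,
      Finset.sum_ite_mem, Finset.univ_inter, sub_sub_cancel]
  have hind : ∀ j, (1 - min1 ((Qmat pos neg).mulVec fun x => 1 - dvec u x) j)
      = if bodyTrue pos neg I j then 1 else 0 := by
    intro j
    rw [min1, hw j]
    by_cases hb : bodyTrue pos neg I j
    · obtain ⟨hpos, hneg⟩ := hb
      have hs1 : ∑ i ∈ pos j, (1 - u i) = 0 := by
        refine Finset.sum_eq_zero fun i hi => ?_
        have := (hmemI i).1 (hpos hi); linarith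
      have hs2 : ∑ i ∈ neg j, u i = 0 := by
        refine Finset.sum_eq_zero fun i hi => ?_
        rcases h01 i with h | h
        · exact h
        · exact absurd (Finset.eq_empty_iff_forall_notMem.1 hneg i
            (Finset.mem_inter.2 ⟨hi, (hmemI i).2 h⟩)) (fun c => c)
      rw [hs1, hs2, if_pos (show bodyTrue pos neg I j from ⟨hpos, hneg⟩)]
      norm_num
    · have hnn1 : ∀ i ∈ pos j, (0:ℝ) ≤ 1 - u i := by
        intro i _; rcases h01 i with h | h <;> simp [h]
      have hnn2 : ∀ i ∈ neg j, (0:ℝ) ≤ u i := by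
        intro i _; rcases h01 i with h | h <;> simp [h]
      have hge : (1:ℝ) ≤ ∑ i ∈ pos j, (1 - u i) + ∑ i ∈ neg j, u i := by
        rw [bodyTrue, not_and_or] at hb
        rcases hb with hb | hb
        · obtain ⟨i0, hi0, hni0⟩ := Finset.not_subset.1 hb
          have hu0 : u i0 = 0 := by
            rcases h01 i0 with h | h
            · exact h
            · exact absurd ((hmemI i0).2 h) hni0
          have : (1:ℝ) ≤ ∑ i ∈ pos j, (1 - u i) := by
            calc (1:ℝ) = 1 - u i0 := by rw [hu0]; ring
            _ ≤ _ := Finset.single_le_sum hnn1 hi0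
          have h2 : (0:ℝ) ≤ ∑ i ∈ neg j, u i := Finset.sum_nonneg hnn2
          linarith
        · obtain ⟨i0, hi0⟩ := Finset.nonempty_iff_ne_empty.2 hb
          rw [Finset.mem_inter] at hi0
          have hu1 : u i0 = 1 := (hmemI i0).1 hi0.2
          have : (1:ℝ) ≤ ∑ i ∈ neg j, u i := by
            calc (1:ℝ) = u i0 := hu1.symm
            _ ≤ _ := Finset.single_le_sum hnn2 hi0.1
          have h2 : (0:ℝ) ≤ ∑ i ∈ pos j, (1 - u i) := Finset.sum_nonneg hnn1
          linarith
      rw [min_eq_right hge]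
      simp [hb]
  have hd' : dvecOf hd pos neg u i
      = ∑ j, (if hd j = i then (1:ℝ) else 0) * (if bodyTrue pos neg I j then 1 else 0) := by
    rw [dvecOf, Matrix.mulVec]
    refine Finset.sum_congr rfl fun j _ => ?_
    simp only [Dmat, Matrix.of_apply]
    rw [hind j]
  have hnn : ∀ j ∈ Finset.univ, (0:ℝ) ≤
      (if hd j = i then (1:ℝ) else 0) * (if bodyTrue pos neg I j then 1 else 0) := by
    intro j _; positivity
  by_cases hex : ∃ j, hd j = i ∧ bodyTrue pos neg I j
  · obtain ⟨j0, hj1, hj2⟩ := hex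
    have hge : (1:ℝ) ≤ dvecOf hd pos neg u i := by
      rw [hd']
      calc (1:ℝ) = (if hd j0 = i then (1:ℝ) else 0) * (if bodyTrue pos neg I j0 then 1 else 0) := by
            simp [hj1, hj2]
      _ ≤ _ := Finset.single_le_sum hnn (Finset.mem_univ j0)
    rw [min1, min_eq_right hge, if_pos ⟨j0, hj1, hj2⟩]
  · have hz : dvecOf hd pos neg u i = 0 := by
      rw [hd']
      refine Finset.sum_eq_zero fun j _ => ?_
      by_cases h1 : hd j = i
      · by_cases h2 : bodyTrue pos neg I j
        · exact absurd ⟨j, h1, h2⟩ hex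
        · simp [h2]
      · simp [h1]
    rw [min1, hz, if_neg hex]
    norm_num

/-- Proposition 3: for `ℓ₂ > 0`, `J_SU(u) = 0` iff `u ∈ {0,1}^n` and the
model `I = {i | u(i) = 1}` is a supported model of `P`. -/
theorem stmt5 {n m : ℕ} (hd : Fin m → Fin n) (pos neg : Fin m → Finset (Fin n))
    (ℓ₂ : ℝ) (hℓ₂ : 0 < ℓ₂) (u : Fin n → ℝ) :
    JSU hd pos neg ℓ₂ u = 0 ↔
      (∀ i, u i = 0 ∨ u i = 1) ∧
        isSupported hd pos neg (Finset.univ.filter fun i => u i = 1) := by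
  rw [JSU_eq_zero_iff hd pos neg ℓ₂ hℓ₂ u]
  constructor
  · rintro ⟨hfix, h01⟩
    refine ⟨h01, fun i => ?_⟩
    have := hfix i
    rw [key_s5 hd pos neg u h01 i] at this
    constructor
    · intro hi
      have hu1 : u i = 1 := (Finset.mem_filter.1 hi).2
      by_contra hex
      rw [if_neg hex] at this
      rw [hu1] at this; norm_num at this
    · intro hex
      rw [if_pos hex] at this
      exact Finset.mem_filter.2 ⟨Finset.mem_univ i, this⟩
  · rintro ⟨h01, hsup⟩
    refine ⟨fun i => ?_, h01⟩
    rw [key_s5 hd pos neg u h01 i]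
    by_cases hex : ∃ j, hd j = i ∧ bodyTrue pos neg (Finset.univ.filter fun i => u i = 1) j
    · rw [if_pos hex]
      exact (Finset.mem_filter.1 ((hsup i).2 hex)).2
    · rw [if_neg hex]
      rcases h01 i with h | h
      · exact h
      · exact absurd ((hsup i).1 (Finset.mem_filter.2 ⟨Finset.mem_univ i, h⟩)) hex
end
end

section
/- Let C be a set of k constraints over n atoms with constraint matrix Q_c, let I be a model and u_I ∈ {0,1}^n its vectorized model. Then J_c(u_I) equals the number of constraints of C violated by I (i.e., the number of c ∈ Fin k with cpos(c) ⊆ I and cneg(c) ∩ I = ∅); in particular J_c(u_I) = 0 if and only if I satisfies all constraints of C. -/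
open Finset Matrix

noncomputable section

/-- the constraint cost `J_c(u) = Σ_c (1 - min₁((Q_c(1 - u^δ))(c)))` -/
def Jc {n k : ℕ} (cpos cneg : Fin k → Finset (Fin n)) (u : Fin n → ℝ) : ℝ :=
  ∑ c, (1 - min1 ((Qmat cpos cneg).mulVec fun x => 1 - dvec u x) c)

lemma mulVec_eq_card {n k : ℕ} (cpos cneg : Fin k → Finset (Fin n)) (I : Finset (Fin n))
    (c : Fin k) :
    ((Qmat cpos cneg).mulVec fun x => 1 - dvec (vecI I) x) c
      = ((cpos c \ I).card + ((cneg c) ∩ I).card : ℝ) := by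
  unfold Qmat dvec vecI Matrix.mulVec
  simp only [Matrix.of_apply, dotProduct, Fintype.sum_sum_type, Sum.elim_inl, Sum.elim_inr,
    sub_sub_cancel]
  have h1 : ∀ i : Fin n, (if i ∈ cpos c then (1:ℝ) else 0) * (1 - if i ∈ I then (1:ℝ) else 0)
      = if i ∈ cpos c \ I then 1 else 0 := by
    intro i; by_cases h : i ∈ cpos c <;> by_cases h' : i ∈ I <;> simp [h, h']
  have h2 : ∀ i : Fin n, (if i ∈ cneg c then (1:ℝ) else 0) * (if i ∈ I then (1:ℝ) else 0)
      = if i ∈ cneg c ∩ I then 1 else 0 := by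
    intro i; by_cases h : i ∈ cneg c <;> by_cases h' : i ∈ I <;> simp [h, h']
  simp_rw [h1, h2, Finset.sum_ite_mem, Finset.inter_comm Finset.univ, Finset.inter_univ,
    Finset.sum_const, nsmul_eq_mul, mul_one]

lemma term_eq {n k : ℕ} (cpos cneg : Fin k → Finset (Fin n)) (I : Finset (Fin n)) (c : Fin k) :
    (1 - min1 ((Qmat cpos cneg).mulVec fun x => 1 - dvec (vecI I) x) c)
      = if bodyTrue cpos cneg I c then 1 else 0 := by
  unfold min1
  rw [mulVec_eq_card]
  by_cases h : bodyTrue cpos cneg I c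
  · obtain ⟨h1, h2⟩ := h
    simp [Finset.sdiff_eq_empty_iff_subset.mpr h1, h2, bodyTrue, h1]
  · have : (1:ℝ) ≤ ((cpos c \ I).card + (cneg c ∩ I).card : ℝ) := by
      have : 1 ≤ (cpos c \ I).card + (cneg c ∩ I).card := by
        refine Nat.one_le_iff_ne_zero.mpr fun h0 => h ?_
        simp only [Nat.add_eq_zero, Finset.card_eq_zero] at h0
        exact ⟨Finset.sdiff_eq_empty_iff_subset.mp h0.1, h0.2⟩
      exact_mod_cast this
    rw [min_eq_right this]
    simp [h]


/-- for a binary `u_I`, `J_c(u_I)` equals the number of constraints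
violated by `I` (those `c` with `cpos c ⊆ I` and `cneg c ∩ I = ∅`); in particular
`J_c(u_I) = 0` iff `I` satisfies all constraints. -/
theorem stmt6 {n k : ℕ} (cpos cneg : Fin k → Finset (Fin n)) (I : Finset (Fin n)) :
    Jc cpos cneg (vecI I)
        = ((Finset.univ.filter fun c => bodyTrue cpos cneg I c).card : ℝ) ∧
    (Jc cpos cneg (vecI I) = 0 ↔ ∀ c, ¬ bodyTrue cpos cneg I c) := by
  have hJ : Jc cpos cneg (vecI I)
      = ((Finset.univ.filter fun c => bodyTrue cpos cneg I c).card : ℝ) := by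
    unfold Jc
    simp_rw [term_eq]
    rw [Finset.sum_boole]
  refine ⟨hJ, ?_⟩
  rw [hJ]
  rw [Nat.cast_eq_zero, Finset.card_eq_zero, Finset.filter_eq_empty_iff]
  simp
end
end

section
/- Let P be a normal logic program over n atoms with m rules and (D, Q) its matricized form, let L be a loop of P, let I be a model and u_I ∈ {0,1}^n its vectorized model, and let M = 1 − min₁(Q(1 − u_I^δ)). Then with A_L = Σ_{i ∈ L}(1 − u_I(i)) + Σ_{j support rule for L} M(j), we have 1 − min₁(A_L) = 0 if and only if I satisfies the loop formula LF(L). -/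
open Finset Matrix

noncomputable section

/-- edge of the positive dependency graph `pdg(P)` -/
def pdgEdge {n m : ℕ} (hd : Fin m → Fin n) (pos : Fin m → Finset (Fin n))
    (a b : Fin n) : Prop :=
  ∃ j, hd j = a ∧ b ∈ pos j

/-- `L` is a loop of the program: a nonempty set of atoms such that between any two of
its atoms there are (nonempty) directed paths in `pdg(P)` in both directions, where a
singleton `L = {a}` requires the edge `(a,a)` -/
def isLoop {n m : ℕ} (hd : Fin m → Fin n) (pos : Fin m → Finset (Fin n))
    (L : Finset (Fin n)) : Prop :=
  L.Nonempty ∧ (∀ a₁ ∈ L, ∀ a₂ ∈ L, Relation.TransGen (pdgEdge hd pos) a₁ a₂) ∧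
    (∀ a, L = {a} → pdgEdge hd pos a a)

/-- rule `j` is a support rule for the loop `L` -/
def isSupportRule {n m : ℕ} (hd : Fin m → Fin n) (pos : Fin m → Finset (Fin n))
    (L : Finset (Fin n)) (j : Fin m) : Prop :=
  hd j ∈ L ∧ pos j ∩ L = ∅

instance {n m : ℕ} (hd : Fin m → Fin n) (pos : Fin m → Finset (Fin n))
    (L : Finset (Fin n)) : DecidablePred (isSupportRule hd pos L) := fun j =>
  inferInstanceAs (Decidable (hd j ∈ L ∧ pos j ∩ L = ∅))

/-- `I` satisfies the loop formula `LF(L)` -/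
def satLF {n m : ℕ} (hd : Fin m → Fin n) (pos neg : Fin m → Finset (Fin n))
    (I : Finset (Fin n)) (L : Finset (Fin n)) : Prop :=
  L ⊆ I → ∃ j, isSupportRule hd pos L j ∧ bodyTrue pos neg I j

/-- `M = 1 - min₁(Q(1 - u^δ))` : the (continuous) truth values of the rule bodies -/
def Mvec {n m : ℕ} (pos neg : Fin m → Finset (Fin n)) (u : Fin n → ℝ) : Fin m → ℝ :=
  fun j => 1 - min1 ((Qmat pos neg).mulVec fun x => 1 - dvec u x) j

/-- `A_L = Σ_{i ∈ L}(1 - u(i)) + Σ_{j support rule for L} M(j)` -/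
def Aval {n m : ℕ} (hd : Fin m → Fin n) (pos neg : Fin m → Finset (Fin n))
    (u : Fin n → ℝ) (L : Finset (Fin n)) : ℝ :=
  (∑ i ∈ L, (1 - u i)) +
    ∑ j ∈ Finset.univ.filter (isSupportRule hd pos L), Mvec pos neg u j

lemma Mvec_eq {n m : ℕ} (pos neg : Fin m → Finset (Fin n)) (I : Finset (Fin n))
    (j : Fin m) :
    Mvec pos neg (vecI I) j = if bodyTrue pos neg I j then 1 else 0 := by
  have hS : (Qmat pos neg).mulVec (fun x => 1 - dvec (vecI I) x) j =
      ((pos j \ I).card : ℝ) + ((neg j ∩ I).card : ℝ) := by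
    simp only [Matrix.mulVec, dotProduct, Qmat, dvec, vecI, Matrix.of_apply,
      Fintype.sum_sum_type, Sum.elim_inl, Sum.elim_inr]
    congr 1
    · rw [show ((pos j \ I).card : ℝ) = ∑ i ∈ Finset.univ ∩ (pos j \ I), (1:ℝ) by
        rw [Finset.univ_inter]; simp]
      rw [← Finset.sum_ite_mem]
      apply Finset.sum_congr rfl
      intro i _
      by_cases h1 : i ∈ pos j <;> by_cases h2 : i ∈ I <;>
        simp [h1, h2, Finset.mem_sdiff]
    · rw [show ((neg j ∩ I).card : ℝ) = ∑ i ∈ Finset.univ ∩ (neg j ∩ I), (1:ℝ) by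
        rw [Finset.univ_inter]; simp]
      rw [← Finset.sum_ite_mem]
      apply Finset.sum_congr rfl
      intro i _
      by_cases h1 : i ∈ neg j <;> by_cases h2 : i ∈ I <;>
        simp [h1, h2, Finset.mem_inter]
  have hbody : bodyTrue pos neg I j ↔ (pos j \ I).card + (neg j ∩ I).card = 0 := by
    constructor
    · rintro ⟨h1, h2⟩
      simp [Finset.card_eq_zero, Finset.sdiff_eq_empty_iff_subset.mpr h1, h2]
    · intro h
      rw [Nat.add_eq_zero] at h
      exact ⟨Finset.sdiff_eq_empty_iff_subset.mp (Finset.card_eq_zero.mp h.1),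
        Finset.card_eq_zero.mp h.2⟩
  unfold Mvec min1
  rw [hS]
  by_cases hb : bodyTrue pos neg I j
  · have := hbody.mp hb
    rw [Nat.add_eq_zero] at this
    simp [hb, this.1, this.2]
  · have hne : (pos j \ I).card + (neg j ∩ I).card ≠ 0 := fun h => hb (hbody.mpr h)
    have h1 : (1 : ℝ) ≤ ((pos j \ I).card : ℝ) + ((neg j ∩ I).card : ℝ) := by
      have : 1 ≤ (pos j \ I).card + (neg j ∩ I).card := Nat.one_le_iff_ne_zero.mpr hne
      exact_mod_cast this
    simp [hb, min_eq_right h1]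

/-- for a loop `L`, with `A_L = Σ_{i ∈ L}(1 - u_I(i)) + Σ_{j support rule
for L} M(j)`, we have `1 - min₁(A_L) = 0` iff `I` satisfies the loop formula `LF(L)`. -/
theorem stmt8 {n m : ℕ} (hd : Fin m → Fin n) (pos neg : Fin m → Finset (Fin n))
    (L : Finset (Fin n)) (hL : isLoop hd pos L) (I : Finset (Fin n)) :
    1 - min (Aval hd pos neg (vecI I) L) 1 = 0 ↔ satLF hd pos neg I L := by
  have hterm1 : ∀ i, (0 : ℝ) ≤ 1 - vecI I i := by
    intro i; unfold vecI; split_ifs <;> norm_num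
  have hterm2 : ∀ j, (0 : ℝ) ≤ Mvec pos neg (vecI I) j := by
    intro j; rw [Mvec_eq]; split_ifs <;> norm_num
  have key : 1 - min (Aval hd pos neg (vecI I) L) 1 = 0 ↔
      1 ≤ Aval hd pos neg (vecI I) L := by
    constructor
    · intro h
      have : min (Aval hd pos neg (vecI I) L) 1 = 1 := by linarith
      exact min_eq_right_iff.mp this
    · intro h
      rw [min_eq_right h]; ring
  rw [key]
  unfold Aval
  constructor
  · intro h hsub
    have hfirst : (∑ i ∈ L, (1 - vecI I i)) = 0 := by
      apply Finset.sum_eq_zero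
      intro i hi
      simp [vecI, hsub hi]
    rw [hfirst, zero_add] at h
    by_contra hnone
    push_neg at hnone
    have : (∑ j ∈ Finset.univ.filter (isSupportRule hd pos L),
        Mvec pos neg (vecI I) j) = 0 := by
      apply Finset.sum_eq_zero
      intro j hj
      rw [Finset.mem_filter] at hj
      rw [Mvec_eq]
      simp [hnone j hj.2]
    linarith
  · intro hsat
    by_cases hsub : L ⊆ I
    · obtain ⟨j, hj1, hj2⟩ := hsat hsub
      have hmem : j ∈ Finset.univ.filter (isSupportRule hd pos L) := by
        simp [hj1]
      have h1 : (1 : ℝ) ≤ ∑ j ∈ Finset.univ.filter (isSupportRule hd pos L),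
          Mvec pos neg (vecI I) j := by
        have := Finset.single_le_sum (fun j _ => hterm2 j) hmem
        rwa [Mvec_eq, if_pos hj2] at this
      have h2 : (0 : ℝ) ≤ ∑ i ∈ L, (1 - vecI I i) :=
        Finset.sum_nonneg fun i _ => hterm1 i
      linarith
    · obtain ⟨i, hiL, hiI⟩ := Finset.not_subset.mp hsub
      have h1 : (1 : ℝ) ≤ ∑ i ∈ L, (1 - vecI I i) := by
        have h := Finset.single_le_sum (f := fun i => 1 - vecI I i)
          (fun i _ => hterm1 i) hiL
        have hv : vecI I i = 0 := by simp [vecI, hiI]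
        simp only [hv] at h
        linarith
      have h2 : (0 : ℝ) ≤ ∑ j ∈ Finset.univ.filter (isSupportRule hd pos L),
          Mvec pos neg (vecI I) j :=
        Finset.sum_nonneg fun j _ => hterm2 j
      linarith
end
end

section
/- Let P be a normal logic program over n atoms, F_P = Fin n \ LM(P⁺) its set of stable false atoms, and P' the precomputed program. Then for every model I' ⊆ Fin n \ F_P, taking I = I' (so that every atom of F_P is false in I), the least models of the reducts coincide: LM(P'^{I'}) = LM(P^{I}). -/
open Finset Matrix

noncomputable section

open scoped Classical in
/-- the least model of the definite program whose rules are `hd j ← ps j`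
for exactly those `j` with `act j`: the smallest set `J` of atoms such that
for every such rule, `ps j ⊆ J` implies `hd j ∈ J`. -/
def LMFor {n m : ℕ} (hd : Fin m → Fin n) (ps : Fin m → Finset (Fin n))
    (act : Fin m → Prop) : Finset (Fin n) :=
  Finset.univ.filter fun a =>
    ∀ J : Finset (Fin n), (∀ j, act j → ps j ⊆ J → hd j ∈ J) → a ∈ J

/-- `I` is a stable model: the least model of the Gelfond–Lifschitz reduct `P^I` equals `I` -/
def isStable {n m : ℕ} (hd : Fin m → Fin n) (pos neg : Fin m → Finset (Fin n))
    (I : Finset (Fin n)) : Prop :=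
  LMFor hd pos (fun j => neg j ∩ I = ∅) = I

/-! Since `I'` avoids `F_P`, removing `F_P` from the negative bodies does not change which rules
survive the reduct. The rules that precomputation deletes have a positive body meeting `F_P`,
so they never fire in `LM(P^I) ⊆ LM(P⁺)`. -/

section LeastModel

variable {n m : ℕ} (hd : Fin m → Fin n) (ps : Fin m → Finset (Fin n))

theorem mem_LMFor {act : Fin m → Prop} {a : Fin n} :
    a ∈ LMFor hd ps act ↔ ∀ J : Finset (Fin n), (∀ j, act j → ps j ⊆ J → hd j ∈ J) → a ∈ J := by
  simp [LMFor]

theorem LMFor_subset_of_closed {act : Fin m → Prop} {J : Finset (Fin n)}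
    (hJ : ∀ j, act j → ps j ⊆ J → hd j ∈ J) : LMFor hd ps act ⊆ J :=
  fun _ ha => (mem_LMFor hd ps).1 ha J hJ

theorem head_mem_LMFor {act : Fin m → Prop} {j : Fin m} (hj : act j)
    (hps : ps j ⊆ LMFor hd ps act) : hd j ∈ LMFor hd ps act :=
  (mem_LMFor hd ps).2 fun _ hJ => hJ j hj (hps.trans (LMFor_subset_of_closed hd ps hJ))

theorem LMFor_mono {act act' : Fin m → Prop} (h : ∀ j, act j → act' j) :
    LMFor hd ps act ⊆ LMFor hd ps act' :=
  LMFor_subset_of_closed hd ps fun j hj hps => head_mem_LMFor hd ps (h j hj) hps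

/-- Rules whose positive body is not contained in the least model never fire, so
deactivating them does not change the least model. -/
theorem LMFor_eq_of_firing_active {act act' : Fin m → Prop} (h : ∀ j, act' j → act j)
    (hfire : ∀ j, act j → ps j ⊆ LMFor hd ps act → act' j) :
    LMFor hd ps act' = LMFor hd ps act := by
  have hsub := LMFor_mono hd ps h
  refine hsub.antisymm (LMFor_subset_of_closed hd ps fun j hj hps => ?_)
  exact head_mem_LMFor hd ps (hfire j hj (hps.trans hsub)) hps

end LeastModel

/-- with `F_P = Fin n \ LM(P⁺)` and `P'` the precomputed program, for every
model `I' ⊆ Fin n \ F_P`, taking `I = I'`, the least models of the reducts coincide: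
`LM(P'^{I'}) = LM(P^I)`. -/
theorem stmt12 {n m : ℕ} (hd : Fin m → Fin n) (pos neg : Fin m → Finset (Fin n))
    (F : Finset (Fin n)) (hF : F = Finset.univ \ LMFor hd pos (fun _ => True))
    (I' : Finset (Fin n)) (hI' : I' ⊆ Finset.univ \ F) :
    LMFor hd pos (fun j => (hd j ∉ F ∧ pos j ∩ F = ∅) ∧ (neg j \ F) ∩ I' = ∅)
      = LMFor hd pos (fun j => neg j ∩ I' = ∅) := by
  subst hF
  set T := LMFor hd pos (fun _ => True)
  have hI'T : I' ⊆ T := by simpa using hI'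
  have hneg : ∀ j, (neg j \ (univ \ T)) ∩ I' = neg j ∩ I' := fun j => by
    ext a
    have := @hI'T a
    simp only [mem_inter, mem_sdiff, mem_univ, true_and, not_not]
    tauto
  refine LMFor_eq_of_firing_active hd pos (fun j hj => hneg j ▸ hj.2) fun j hj hps => ?_
  have hpsT : pos j ⊆ T := hps.trans (LMFor_mono hd pos fun _ _ => trivial)
  refine ⟨⟨?_, ?_⟩, hneg j ▸ hj⟩
  · simpa using head_mem_LMFor hd pos trivial hpsT
  · simpa [Finset.eq_empty_iff_forall_notMem] using fun a ha => hpsT ha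
end
end

section
/- (Proposition 7) Let P be a normal logic program over n atoms, C a set of constraints, F_P = Fin n \ LM(P⁺) its set of stable false atoms, and let P' and C' be the precomputed program and constraints. Let I' ⊆ Fin n \ F_P be a model and let I = I' (so every atom of F_P is false in I). Then I' is a stable model of P' satisfying every constraint of C' if and only if I is a stable model of P satisfying every constraint of C. -/
open Finset Matrix

noncomputable section

lemma LMFor_subset' {n m : ℕ} (hd : Fin m → Fin n) (ps : Fin m → Finset (Fin n))
    (act : Fin m → Prop) (J : Finset (Fin n))
    (hJ : ∀ j, act j → ps j ⊆ J → hd j ∈ J) : LMFor hd ps act ⊆ J := by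
  classical
  intro a ha
  simp only [LMFor, Finset.mem_filter] at ha
  exact ha.2 J hJ

lemma LMFor_closed {n m : ℕ} (hd : Fin m → Fin n) (ps : Fin m → Finset (Fin n))
    (act : Fin m → Prop) (j : Fin m) (hact : act j) (hps : ps j ⊆ LMFor hd ps act) :
    hd j ∈ LMFor hd ps act := by
  classical
  simp only [LMFor, Finset.mem_filter]
  refine ⟨Finset.mem_univ _, fun J hJ => hJ j hact (fun x hx => ?_)⟩
  have := hps hx
  simp only [LMFor, Finset.mem_filter] at this
  exact this.2 J hJ

/-- Proposition 7: with `F_P = Fin n \ LM(P⁺)` and `P'`, `C'` the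
precomputed program and constraints, for every model `I' ⊆ Fin n \ F_P`, taking `I = I'`:
`I'` is a stable model of `P'` satisfying every constraint of `C'` iff `I` is a stable
model of `P` satisfying every constraint of `C`. -/
theorem stmt13 {n m k : ℕ} (hd : Fin m → Fin n) (pos neg : Fin m → Finset (Fin n))
    (cpos cneg : Fin k → Finset (Fin n))
    (F : Finset (Fin n)) (hF : F = Finset.univ \ LMFor hd pos (fun _ => True))
    (I' : Finset (Fin n)) (hI' : I' ⊆ Finset.univ \ F) :
    (LMFor hd pos (fun j => (hd j ∉ F ∧ pos j ∩ F = ∅) ∧ (neg j \ F) ∩ I' = ∅) = I' ∧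
        ∀ c, cpos c ∩ F = ∅ → ¬(cpos c ⊆ I' ∧ (cneg c \ F) ∩ I' = ∅)) ↔
      (isStable hd pos neg I' ∧ ∀ c, ¬(cpos c ⊆ I' ∧ cneg c ∩ I' = ∅)) := by
  classical
  have hdisj : ∀ {x}, x ∈ I' → x ∉ F := fun hx hxF =>
    (Finset.mem_sdiff.mp (hI' hx)).2 hxF
  have hsd : ∀ S : Finset (Fin n), (S \ F) ∩ I' = S ∩ I' := by
    intro S; ext x
    simp only [Finset.mem_inter, Finset.mem_sdiff]
    exact ⟨fun h => ⟨h.1.1, h.2⟩, fun h => ⟨⟨h.1, hdisj h.2⟩, h.2⟩⟩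
  have hcompl : Finset.univ \ F = LMFor hd pos (fun _ => True) := by
    rw [hF]; ext x; simp
  have hLM : LMFor hd pos (fun j => (hd j ∉ F ∧ pos j ∩ F = ∅) ∧ (neg j \ F) ∩ I' = ∅)
      = LMFor hd pos (fun j => neg j ∩ I' = ∅) := by
    apply Finset.Subset.antisymm
    · apply LMFor_subset'
      intro j hj hpos
      apply LMFor_closed
      · rw [← hsd]; exact hj.2
      · exact hpos
    · intro a ha
      simp only [LMFor, Finset.mem_filter]
      refine ⟨Finset.mem_univ _, fun J hJ => ?_⟩
      have hK : a ∈ J ∩ (Finset.univ \ F) → a ∈ J := fun h => (Finset.mem_inter.mp h).1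
      apply hK
      refine LMFor_subset' hd pos _ _ (fun j hj hpos => ?_) ha
      have hposF : pos j ⊆ Finset.univ \ F := fun x hx => (Finset.mem_inter.mp (hpos hx)).2
      have hhd : hd j ∈ Finset.univ \ F := by
        rw [hcompl] at hposF ⊢
        exact LMFor_closed hd pos _ j trivial hposF
      have hposJ : pos j ⊆ J := fun x hx => (Finset.mem_inter.mp (hpos hx)).1
      have hposFe : pos j ∩ F = ∅ := by
        ext x; simp only [Finset.mem_inter, Finset.notMem_empty, iff_false, not_and]
        intro h1 h2
        exact (Finset.mem_sdiff.mp (hposF h1)).2 h2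
      refine Finset.mem_inter.mpr
        ⟨hJ j ⟨⟨(Finset.mem_sdiff.mp hhd).2, hposFe⟩, ?_⟩ hposJ, hhd⟩
      rw [hsd]; exact hj
  constructor
  · rintro ⟨h1, h2⟩
    refine ⟨by rw [isStable, ← hLM, h1], fun c hc => ?_⟩
    have hcp : cpos c ∩ F = ∅ := by
      ext x; simp only [Finset.mem_inter, Finset.notMem_empty, iff_false, not_and]
      intro h1' h2'
      exact hdisj (hc.1 h1') h2'
    exact h2 c hcp ⟨hc.1, by rw [hsd]; exact hc.2⟩
  · rintro ⟨h1, h2⟩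
    exact ⟨by rw [hLM]; exact h1, fun c _ hc => h2 c ⟨hc.1, by rw [← hsd]; exact hc.2⟩⟩
end
end

section
/- Let Q¹, Q² ∈ ℝ^{m×n} be matrices with entries in {0,1}. Then for every u ∈ ℝ^n, componentwise, 1 − min₁(Q¹(1 − u) + Q² u) = ReLU((Q¹ − Q²) u + (1 − Q¹ 𝟙)), where 𝟙 ∈ ℝ^n is the all-ones vector, min₁ is componentwise x ↦ min(x,1), and ReLU is componentwise x ↦ max(x,0). That is, the matricized rule-body evaluation 1 − min₁(Q(1 − u^δ)) equals the output ReLU(W u + b) of a ReLU layer with weight matrix W = Q¹ − Q² and bias b = 1 − Q¹ 𝟙. -/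
open Matrix

theorem one_sub_min_one {α : Type*} [AddCommGroup α] [LinearOrder α] [IsOrderedAddMonoid α]
    [One α] (x : α) : 1 - min x 1 = max (1 - x) 0 := by
  rw [← max_sub_sub_left, sub_self]

theorem mulVec_one_sub_add_mulVec {R m n : Type*} [Fintype n] [Ring R]
    (Q1 Q2 : Matrix m n R) (u : n → R) :
    Q1 *ᵥ (1 - u) + Q2 *ᵥ u = Q1 *ᵥ 1 - (Q1 - Q2) *ᵥ u := by
  rw [mulVec_sub, sub_mulVec]
  abel

theorem stmt14_general {m n : ℕ} (Q1 Q2 : Matrix (Fin m) (Fin n) ℝ)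
    (u : Fin n → ℝ) (j : Fin m) :
    1 - min (Q1.mulVec (fun i => 1 - u i) j + Q2.mulVec u j) 1
      = max ((Q1 - Q2).mulVec u j + (1 - Q1.mulVec (fun _ => 1) j)) 0 := by
  have hsum : Q1.mulVec (fun i => 1 - u i) j + Q2.mulVec u j
      = Q1.mulVec (fun _ => 1) j - (Q1 - Q2).mulVec u j :=
    congrFun (mulVec_one_sub_add_mulVec Q1 Q2 u) j
  rw [one_sub_min_one, hsum]
  congr 1
  ring

/-- for binary matrices `Q¹, Q² ∈ ℝ^{m×n}` and any `u ∈ ℝ^n`, componentwise,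
`1 - min₁(Q¹(1 - u) + Q² u) = ReLU((Q¹ - Q²) u + (1 - Q¹ 𝟙))`, i.e. the matricized
rule-body evaluation equals the output of a ReLU layer with weights `W = Q¹ - Q²` and
bias `b = 1 - Q¹ 𝟙`. -/
theorem stmt14 {m n : ℕ} (Q1 Q2 : Matrix (Fin m) (Fin n) ℝ)
    (hQ1 : ∀ j i, Q1 j i = 0 ∨ Q1 j i = 1) (hQ2 : ∀ j i, Q2 j i = 0 ∨ Q2 j i = 1)
    (u : Fin n → ℝ) (j : Fin m) :
    1 - min (Q1.mulVec (fun i => 1 - u i) j + Q2.mulVec u j) 1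
      = max ((Q1 - Q2).mulVec u j + (1 - Q1.mulVec (fun _ => 1) j)) 0 :=
  stmt14_general Q1 Q2 u j
end

section
/- For even n ≥ 2, consider the normal logic program P_{4_n} over atoms {a₀, a₁, …, a_n, a_{n+1}} with rules: a₀ ← a₁ ∧ … ∧ a_n; a₀ ← ¬a_{n+1}; for each i with 1 ≤ i ≤ n/2, the four rules a_{2i−1} ← a₀, a_{2i−1} ← a_{2i}, a_{2i} ← a₀, a_{2i} ← a_{2i−1}; and a_{n+1} ← a_{n+1}. Then P_{4_n} has exactly 2^{n/2} + 1 supported models and exactly one stable model, namely {a₀, a₁, …, a_n}. -/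
/-- a rule of a normal logic program over atoms `ℕ` -/
structure NRule where
  head : ℕ
  pos : Finset ℕ
  neg : Finset ℕ

/-- `I` satisfies the body of rule `r` -/
def ruleBodyTrue (I : Set ℕ) (r : NRule) : Prop :=
  ↑r.pos ⊆ I ∧ ∀ b ∈ r.neg, b ∉ I

/-- `I` is a supported model of the program `P` -/
def SuppModel (P : Set NRule) (I : Set ℕ) : Prop :=
  ∀ a, a ∈ I ↔ ∃ r ∈ P, r.head = a ∧ ruleBodyTrue I r

/-- the least model of a definite program `P`: the smallest set `J` of atoms such that
for every rule of `P`, if its positive body is contained in `J` then its head is in `J`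
(realized as the intersection of all such sets). -/
def LMset (P : Set NRule) : Set ℕ :=
  {a | ∀ J : Set ℕ, (∀ r ∈ P, ↑r.pos ⊆ J → r.head ∈ J) → a ∈ J}

/-- the Gelfond–Lifschitz reduct `P^I` -/
def Reduct (P : Set NRule) (I : Set ℕ) : Set NRule :=
  {r | ∃ r' ∈ P, (∀ b ∈ r'.neg, b ∉ I) ∧ r = ⟨r'.head, r'.pos, ∅⟩}

/-- `I` is a stable model of `P` -/
def StableModel (P : Set NRule) (I : Set ℕ) : Prop :=
  LMset (Reduct P I) = I

/-- the program `P_{4_n}` over atoms `{a₀, a₁, …, a_n, a_{n+1}}` (atom `aᵢ` is `i`):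
`a₀ ← a₁ ∧ … ∧ a_n`;  `a₀ ← ¬a_{n+1}`;  for `1 ≤ i ≤ n/2` the four rules
`a_{2i−1} ← a₀`, `a_{2i−1} ← a_{2i}`, `a_{2i} ← a₀`, `a_{2i} ← a_{2i−1}`;
and `a_{n+1} ← a_{n+1}`. -/
def P4 (n : ℕ) : Set NRule :=
  {⟨0, Finset.Icc 1 n, ∅⟩, ⟨0, ∅, {n + 1}⟩} ∪
    (⋃ i ∈ Set.Icc 1 (n / 2),
      ({⟨2 * i - 1, {0}, ∅⟩, ⟨2 * i - 1, {2 * i}, ∅⟩,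
        ⟨2 * i, {0}, ∅⟩, ⟨2 * i, {2 * i - 1}, ∅⟩} : Set NRule)) ∪
    {⟨n + 1, {n + 1}, ∅⟩}

lemma mem_P4 (n : ℕ) (r : NRule) : r ∈ P4 n ↔
    r = ⟨0, Finset.Icc 1 n, ∅⟩ ∨ r = ⟨0, ∅, {n + 1}⟩ ∨
    (∃ i, (1 ≤ i ∧ i ≤ n / 2) ∧
      (r = ⟨2 * i - 1, {0}, ∅⟩ ∨ r = ⟨2 * i - 1, {2 * i}, ∅⟩ ∨
       r = ⟨2 * i, {0}, ∅⟩ ∨ r = ⟨2 * i, {2 * i - 1}, ∅⟩)) ∨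
    r = ⟨n + 1, {n + 1}, ∅⟩ := by
  simp only [P4, Set.mem_union, Set.mem_iUnion, Set.mem_insert_iff, Set.mem_singleton_iff,
    Set.mem_Icc, exists_prop]
  aesop

lemma exists_rule (n m : ℕ) (hm : n = 2 * m) (I : Set ℕ) (a : ℕ) :
    (∃ r ∈ P4 n, r.head = a ∧ ruleBodyTrue I r) ↔
      (a = 0 ∧ ((Finset.Icc 1 n : Finset ℕ) : Set ℕ) ⊆ I ∨ a = 0 ∧ (n+1:ℕ) ∉ I) ∨
      (∃ i, 1 ≤ i ∧ i ≤ m ∧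
        ((a = 2*i-1 ∧ ((0:ℕ) ∈ I ∨ 2*i ∈ I)) ∨ (a = 2*i ∧ ((0:ℕ) ∈ I ∨ 2*i-1 ∈ I)))) ∨
      (a = n + 1 ∧ (n+1:ℕ) ∈ I) := by
  have hm2 : n / 2 = m := by omega
  constructor
  · rintro ⟨r, hr, hhead, hbody⟩
    rcases (mem_P4 n r).1 hr with h | h | ⟨i, ⟨hi1, hi2⟩, h | h | h | h⟩ | h <;> subst h
    · exact Or.inl (Or.inl ⟨hhead.symm, hbody.1⟩)
    · exact Or.inl (Or.inr ⟨hhead.symm, by simpa using hbody.2⟩)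
    · exact Or.inr (Or.inl ⟨i, hi1, hm2 ▸ hi2, Or.inl ⟨hhead.symm, Or.inl (by simpa using hbody.1)⟩⟩)
    · exact Or.inr (Or.inl ⟨i, hi1, hm2 ▸ hi2, Or.inl ⟨hhead.symm, Or.inr (by simpa using hbody.1)⟩⟩)
    · exact Or.inr (Or.inl ⟨i, hi1, hm2 ▸ hi2, Or.inr ⟨hhead.symm, Or.inl (by simpa using hbody.1)⟩⟩)
    · exact Or.inr (Or.inl ⟨i, hi1, hm2 ▸ hi2, Or.inr ⟨hhead.symm, Or.inr (by simpa using hbody.1)⟩⟩)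
    · exact Or.inr (Or.inr ⟨hhead.symm, by simpa using hbody.1⟩)
  · rintro ((⟨rfl, h⟩ | ⟨rfl, h⟩) | ⟨i, hi1, hi2, ⟨rfl, h | h⟩ | ⟨rfl, h | h⟩⟩ | ⟨rfl, h⟩)
    · exact ⟨⟨0, Finset.Icc 1 n, ∅⟩, (mem_P4 n _).2 (Or.inl rfl), rfl, h, by simp⟩
    · exact ⟨⟨0, ∅, {n+1}⟩, (mem_P4 n _).2 (Or.inr (Or.inl rfl)), rfl, by simp, by simpa using h⟩
    · exact ⟨⟨2*i-1, {0}, ∅⟩, (mem_P4 n _).2 (Or.inr (Or.inr (Or.inl ⟨i, ⟨hi1, hm2 ▸ hi2⟩, Or.inl rfl⟩))),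
        rfl, by simpa using h, by simp⟩
    · exact ⟨⟨2*i-1, {2*i}, ∅⟩, (mem_P4 n _).2 (Or.inr (Or.inr (Or.inl ⟨i, ⟨hi1, hm2 ▸ hi2⟩, Or.inr (Or.inl rfl)⟩))),
        rfl, by simpa using h, by simp⟩
    · exact ⟨⟨2*i, {0}, ∅⟩, (mem_P4 n _).2 (Or.inr (Or.inr (Or.inl ⟨i, ⟨hi1, hm2 ▸ hi2⟩, Or.inr (Or.inr (Or.inl rfl))⟩))),
        rfl, by simpa using h, by simp⟩
    · exact ⟨⟨2*i, {2*i-1}, ∅⟩, (mem_P4 n _).2 (Or.inr (Or.inr (Or.inl ⟨i, ⟨hi1, hm2 ▸ hi2⟩, Or.inr (Or.inr (Or.inr rfl))⟩))),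
        rfl, by simpa using h, by simp⟩
    · exact ⟨⟨n+1, {n+1}, ∅⟩, (mem_P4 n _).2 (Or.inr (Or.inr (Or.inr rfl))),
        rfl, by simpa using h, by simp⟩

lemma supp_char (n m : ℕ) (hm : n = 2 * m) (h1 : 1 ≤ m) (I : Set ℕ) :
    SuppModel (P4 n) I ↔
      (((0:ℕ) ∈ I) ↔ (((Finset.Icc 1 n : Finset ℕ) : Set ℕ) ⊆ I ∨ (n+1:ℕ) ∉ I)) ∧
      (∀ i, 1 ≤ i → i ≤ m →
        ((2*i-1 ∈ I ↔ ((0:ℕ) ∈ I ∨ 2*i ∈ I)) ∧ (2*i ∈ I ↔ ((0:ℕ) ∈ I ∨ 2*i-1 ∈ I)))) ∧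
      (∀ a ∈ I, a ≤ n + 1) := by
  constructor
  · intro hS
    refine ⟨?_, ?_, ?_⟩
    · rw [hS 0, exists_rule n m hm]
      constructor
      · rintro ((⟨_, h⟩ | ⟨_, h⟩) | ⟨i, hi1, hi2, ⟨h, _⟩ | ⟨h, _⟩⟩ | ⟨h, _⟩)
        · exact Or.inl h
        · exact Or.inr h
        · omega
        · omega
        · omega
      · rintro (h | h)
        · exact Or.inl (Or.inl ⟨rfl, h⟩)
        · exact Or.inl (Or.inr ⟨rfl, h⟩)
    · intro i hi1 hi2
      constructor
      · rw [hS (2*i-1), exists_rule n m hm]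
        constructor
        · rintro ((⟨h, _⟩ | ⟨h, _⟩) | ⟨j, hj1, hj2, ⟨h, hb⟩ | ⟨h, hb⟩⟩ | ⟨h, _⟩)
          · omega
          · omega
          · have : j = i := by omega
            subst this; exact hb
          · omega
          · omega
        · intro h
          exact Or.inr (Or.inl ⟨i, hi1, hi2, Or.inl ⟨rfl, h⟩⟩)
      · rw [hS (2*i), exists_rule n m hm]
        constructor
        · rintro ((⟨h, _⟩ | ⟨h, _⟩) | ⟨j, hj1, hj2, ⟨h, hb⟩ | ⟨h, hb⟩⟩ | ⟨h, _⟩)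
          · omega
          · omega
          · omega
          · have : j = i := by omega
            subst this; exact hb
          · omega
        · intro h
          exact Or.inr (Or.inl ⟨i, hi1, hi2, Or.inr ⟨rfl, h⟩⟩)
    · intro a ha
      rcases (exists_rule n m hm I a).1 ((hS a).1 ha) with
        (⟨rfl, _⟩ | ⟨rfl, _⟩) | ⟨i, hi1, hi2, ⟨rfl, _⟩ | ⟨rfl, _⟩⟩ | ⟨rfl, _⟩ <;> omega
  · rintro ⟨H0, Hp, Hb⟩ a
    rw [exists_rule n m hm]
    constructor
    · intro ha
      have hle : a ≤ n + 1 := Hb a ha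
      rcases Nat.lt_or_ge a 1 with h | h
      · interval_cases a
        rcases H0.1 ha with h | h
        · exact Or.inl (Or.inl ⟨rfl, h⟩)
        · exact Or.inl (Or.inr ⟨rfl, h⟩)
      · rcases Nat.lt_or_ge a (n+1) with h' | h'
        · rcases Nat.even_or_odd a with ⟨k, hk⟩ | ⟨k, hk⟩
          · refine Or.inr (Or.inl ⟨k, by omega, by omega, Or.inr ⟨by omega, ?_⟩⟩)
            have : a = 2 * k := by omega
            exact (Hp k (by omega) (by omega)).2.1 (this ▸ ha)
          · refine Or.inr (Or.inl ⟨k+1, by omega, by omega, Or.inl ⟨by omega, ?_⟩⟩)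
            have : a = 2 * (k+1) - 1 := by omega
            exact (Hp (k+1) (by omega) (by omega)).1.1 (this ▸ ha)
        · have : a = n + 1 := by omega
          exact Or.inr (Or.inr ⟨this, this ▸ ha⟩)
    · rintro ((⟨rfl, h⟩ | ⟨rfl, h⟩) | ⟨i, hi1, hi2, ⟨rfl, h⟩ | ⟨rfl, h⟩⟩ | ⟨rfl, h⟩)
      · exact H0.2 (Or.inl h)
      · exact H0.2 (Or.inr h)
      · exact (Hp i hi1 hi2).1.2 h
      · exact (Hp i hi1 hi2).2.2 h
      · exact h

lemma LM_of_not (n m : ℕ) (hm : n = 2 * m) (h1 : 1 ≤ m) (I : Set ℕ) (hn1 : (n+1:ℕ) ∉ I) :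
    LMset (Reduct (P4 n) I) = Set.Icc 0 n := by
  have hm2 : n / 2 = m := by omega
  apply Set.Subset.antisymm
  · intro a ha
    apply ha (Set.Icc 0 n)
    rintro r ⟨r', hr', hneg, rfl⟩ hpos
    rcases (mem_P4 n r').1 hr' with h | h | ⟨i, ⟨hi1, hi2⟩, h | h | h | h⟩ | h <;> subst h <;>
      simp only [Set.mem_Icc] at * <;> first
      | omega
      | (exfalso
         have := hpos (by simp : (n+1:ℕ) ∈ (({n+1} : Finset ℕ) : Set ℕ))
         simp only [Set.mem_Icc] at this
         omega)
  · intro a ha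
    intro J hJ
    have h0 : (0:ℕ) ∈ J := by
      have hmem : (⟨0, ∅, ∅⟩ : NRule) ∈ Reduct (P4 n) I := by
        refine ⟨⟨0, ∅, {n+1}⟩, (mem_P4 n _).2 (Or.inr (Or.inl rfl)), ?_, rfl⟩
        simpa using hn1
      have := hJ _ hmem (by simp)
      simpa using this
    have hpair : ∀ i, 1 ≤ i → i ≤ m → 2*i-1 ∈ J ∧ 2*i ∈ J := by
      intro i hi1 hi2
      constructor
      · have hmem : (⟨2*i-1, {0}, ∅⟩ : NRule) ∈ Reduct (P4 n) I := by
          refine ⟨⟨2*i-1, {0}, ∅⟩, (mem_P4 n _).2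
            (Or.inr (Or.inr (Or.inl ⟨i, ⟨hi1, by omega⟩, Or.inl rfl⟩))), by simp, rfl⟩
        exact hJ _ hmem (by simpa using h0)
      · have hmem : (⟨2*i, {0}, ∅⟩ : NRule) ∈ Reduct (P4 n) I := by
          refine ⟨⟨2*i, {0}, ∅⟩, (mem_P4 n _).2
            (Or.inr (Or.inr (Or.inl ⟨i, ⟨hi1, by omega⟩, Or.inr (Or.inr (Or.inl rfl))⟩))), by simp, rfl⟩
        exact hJ _ hmem (by simpa using h0)
    simp only [Set.mem_Icc] at ha
    rcases Nat.lt_or_ge a 1 with h | h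
    · have : a = 0 := by omega
      exact this ▸ h0
    · rcases Nat.even_or_odd a with ⟨k, hk⟩ | ⟨k, hk⟩
      · have : a = 2 * k := by omega
        exact this ▸ (hpair k (by omega) (by omega)).2
      · have : a = 2 * (k+1) - 1 := by omega
        exact this ▸ (hpair (k+1) (by omega) (by omega)).1

lemma notMem_LM_of_mem (n m : ℕ) (hm : n = 2 * m) (h1 : 1 ≤ m) (I : Set ℕ)
    (hn1 : (n+1:ℕ) ∈ I) (a : ℕ) : a ∉ LMset (Reduct (P4 n) I) := by
  intro ha
  have := ha ∅ ?_
  · exact this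
  · rintro r ⟨r', hr', hneg, rfl⟩ hpos
    exfalso
    rcases (mem_P4 n r').1 hr' with h | h | ⟨i, ⟨hi1, hi2⟩, h | h | h | h⟩ | h <;> subst h
    · exact hpos (by simp; omega : (1:ℕ) ∈ ((Finset.Icc 1 n : Finset ℕ) : Set ℕ))
    · exact hneg (n+1) (by simp) hn1
    · simpa using hpos (show (0:ℕ) ∈ (({0}:Finset ℕ):Set ℕ) by simp)
    · simpa using hpos (show (2*i:ℕ) ∈ (({2*i}:Finset ℕ):Set ℕ) by simp)
    · simpa using hpos (show (0:ℕ) ∈ (({0}:Finset ℕ):Set ℕ) by simp)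
    · simpa using hpos (show (2*i-1:ℕ) ∈ (({2*i-1}:Finset ℕ):Set ℕ) by simp)
    · simpa using hpos (show (n+1:ℕ) ∈ (({n+1}:Finset ℕ):Set ℕ) by simp)

lemma stable_char (n m : ℕ) (hm : n = 2 * m) (h1 : 1 ≤ m) :
    {I : Set ℕ | StableModel (P4 n) I} = {Set.Icc 0 n} := by
  ext I
  simp only [Set.mem_setOf_eq, Set.mem_singleton_iff, StableModel]
  constructor
  · intro hSt
    by_cases hn1 : (n+1:ℕ) ∈ I
    · exfalso
      exact notMem_LM_of_mem n m hm h1 I hn1 (n+1) (by rw [hSt]; exact hn1)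
    · rw [← hSt, LM_of_not n m hm h1 I hn1]
  · rintro rfl
    have hn1 : (n+1:ℕ) ∉ Set.Icc 0 n := by simp
    exact LM_of_not n m hm h1 _ hn1

def pairsF (S : Finset ℕ) : Finset ℕ := S.biUnion fun i => {2*i-1, 2*i}

noncomputable def gSet (n : ℕ) (S : Finset ℕ) : Set ℕ :=
  if S = Finset.Icc 1 (n / 2) then Set.Icc 0 n else ↑(insert (n+1) (pairsF S))

lemma gset_full (n : ℕ) : gSet n (Finset.Icc 1 (n/2)) = Set.Icc 0 n := by
  simp [gSet]

lemma mem_pairsF (S : Finset ℕ) (a : ℕ) :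
    a ∈ pairsF S ↔ ∃ i ∈ S, a = 2*i-1 ∨ a = 2*i := by
  simp [pairsF]

lemma mem_gset_nonfull (n : ℕ) (S : Finset ℕ) (hS : S ≠ Finset.Icc 1 (n/2)) (a : ℕ) :
    a ∈ gSet n S ↔ a = n + 1 ∨ ∃ i ∈ S, (a = 2*i-1 ∨ a = 2*i) := by
  simp [gSet, hS, mem_pairsF]

lemma supp_set_eq (n m : ℕ) (hm : n = 2 * m) (h1 : 1 ≤ m) :
    {I : Set ℕ | SuppModel (P4 n) I} =
      insert (Set.Icc 0 (n+1))
        (gSet n '' ((Finset.Icc 1 (n/2)).powerset : Finset (Finset ℕ))) := by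
  have hm2 : n / 2 = m := by omega
  ext I
  simp only [Set.mem_setOf_eq, Set.mem_insert_iff, Set.mem_image, Finset.coe_powerset,
    Set.mem_preimage, Set.mem_powerset_iff, Finset.coe_subset]
  rw [supp_char n m hm h1]
  constructor
  · rintro ⟨H0, Hp, Hb⟩
    by_cases h0 : (0:ℕ) ∈ I
    · have hall : ∀ a, 1 ≤ a → a ≤ n → a ∈ I := by
        intro a ha1 ha2
        rcases Nat.even_or_odd a with ⟨k, hk⟩ | ⟨k, hk⟩
        · have : a = 2 * k := by omega
          exact this ▸ (Hp k (by omega) (by omega)).2.2 (Or.inl h0)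
        · have : a = 2 * (k+1) - 1 := by omega
          exact this ▸ (Hp (k+1) (by omega) (by omega)).1.2 (Or.inl h0)
      by_cases hn1 : (n+1:ℕ) ∈ I
      · left
        ext a
        simp only [Set.mem_Icc]
        constructor
        · intro ha; exact ⟨Nat.zero_le a, Hb a ha⟩
        · rintro ⟨-, ha⟩
          rcases Nat.lt_or_ge a 1 with h | h
          · have : a = 0 := by omega
            exact this ▸ h0
          · rcases Nat.lt_or_ge a (n+1) with h' | h'
            · exact hall a h (by omega)
            · have : a = n + 1 := by omega
              exact this ▸ hn1
      · right
        refine ⟨Finset.Icc 1 (n/2), le_refl _, ?_⟩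
        rw [gset_full]
        symm
        ext a
        simp only [Set.mem_Icc]
        constructor
        · intro ha
          refine ⟨Nat.zero_le a, ?_⟩
          have := Hb a ha
          rcases Nat.lt_or_ge a (n+1) with h' | h'
          · omega
          · exfalso; have : a = n + 1 := by omega
            exact hn1 (this ▸ ha)
        · rintro ⟨-, ha⟩
          rcases Nat.lt_or_ge a 1 with h | h
          · have : a = 0 := by omega
            exact this ▸ h0
          · exact hall a h ha
    · have hne : ¬(((Finset.Icc 1 n : Finset ℕ) : Set ℕ) ⊆ I ∨ (n+1:ℕ) ∉ I) := fun h => h0 (H0.2 h)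
      push_neg at hne
      obtain ⟨hsub, hn1⟩ := hne
      classical
      set S : Finset ℕ := (Finset.Icc 1 m).filter (fun i => 2*i ∈ I) with hSdef
      have hSsub : S ⊆ Finset.Icc 1 m := Finset.filter_subset _ _
      have hSmem : ∀ i, i ∈ S ↔ (1 ≤ i ∧ i ≤ m ∧ 2*i ∈ I) := by
        intro i; simp [hSdef, Finset.mem_filter, Finset.mem_Icc, and_assoc]
      have hSne : S ≠ Finset.Icc 1 (n/2) := by
        rw [hm2]
        obtain ⟨a, haIcc, haI⟩ := Set.not_subset.1 hsub
        simp only [Finset.coe_Icc, Set.mem_Icc] at haIcc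
        rcases Nat.even_or_odd a with ⟨k, hk⟩ | ⟨k, hk⟩
        · intro hEq
          have hk' : k ∈ S := by rw [hEq]; simp [Finset.mem_Icc]; omega
          have : a = 2 * k := by omega
          exact haI (this ▸ ((hSmem k).1 hk').2.2)
        · intro hEq
          have hk' : k + 1 ∈ S := by rw [hEq]; simp [Finset.mem_Icc]; omega
          have h2k : 2*(k+1) ∈ I := ((hSmem (k+1)).1 hk').2.2
          have h2k1 : 2*(k+1)-1 ∈ I := (Hp (k+1) (by omega) (by omega)).1.2 (Or.inr h2k)
          have : a = 2*(k+1)-1 := by omega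
          exact haI (this ▸ h2k1)
      right
      refine ⟨S, hm2 ▸ hSsub, ?_⟩
      symm
      ext a
      rw [mem_gset_nonfull n S hSne]
      constructor
      · intro ha
        have hle : a ≤ n + 1 := Hb a ha
        rcases Nat.lt_or_ge a 1 with h | h
        · exfalso; have : a = 0 := by omega
          exact h0 (this ▸ ha)
        · rcases Nat.lt_or_ge a (n+1) with h' | h'
          · right
            rcases Nat.even_or_odd a with ⟨k, hk⟩ | ⟨k, hk⟩
            · have hak : a = 2 * k := by omega
              exact ⟨k, (hSmem k).2 ⟨by omega, by omega, hak ▸ ha⟩, Or.inr hak⟩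
            · have hak : a = 2 * (k+1) - 1 := by omega
              have h2k : 2*(k+1) ∈ I := by
                rcases (Hp (k+1) (by omega) (by omega)).1.1 (hak ▸ ha) with h | h
                · exact absurd h h0
                · exact h
              exact ⟨k+1, (hSmem (k+1)).2 ⟨by omega, by omega, h2k⟩, Or.inl hak⟩
          · left; omega
      · rintro (rfl | ⟨i, hiS, rfl | rfl⟩)
        · exact hn1
        · obtain ⟨hi1, hi2, h2i⟩ := (hSmem i).1 hiS
          exact (Hp i hi1 hi2).1.2 (Or.inr h2i)
        · exact ((hSmem i).1 hiS).2.2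
  · rintro (rfl | ⟨S, hSsub, rfl⟩)
    · refine ⟨?_, ?_, ?_⟩
      · simp only [Set.mem_Icc]
        constructor
        · intro _
          left
          intro a ha
          simp only [Finset.coe_Icc, Set.mem_Icc] at ha
          simp only [Set.mem_Icc]; omega
        · intro _; omega
      · intro i hi1 hi2
        simp only [Set.mem_Icc]
        constructor <;> constructor <;> intro h <;> first | omega | (left; omega)
      · intro a ha
        simp only [Set.mem_Icc] at ha; omega
    · by_cases hfull : S = Finset.Icc 1 (n/2)
      · subst hfull
        rw [gset_full]
        refine ⟨?_, ?_, ?_⟩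
        · simp only [Set.mem_Icc]
          constructor
          · intro _
            left
            intro a ha
            simp only [Finset.coe_Icc, Set.mem_Icc] at ha
            simp only [Set.mem_Icc]; omega
          · intro _; omega
        · intro i hi1 hi2
          simp only [Set.mem_Icc]
          constructor <;> constructor <;> intro h <;> first | omega | (left; omega)
        · intro a ha
          simp only [Set.mem_Icc] at ha; omega
      · have hmem := mem_gset_nonfull n S hfull
        have hSsub' : ∀ i ∈ S, 1 ≤ i ∧ i ≤ m := by
          intro i hi
          have := hSsub hi
          simp only [Finset.mem_Icc] at this
          omega
        have h0 : (0:ℕ) ∉ gSet n S := by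
          rw [hmem]
          rintro (h | ⟨i, hiS, h | h⟩)
          · omega
          · have := (hSsub' i hiS).1; omega
          · have := (hSsub' i hiS).1; omega
        have hn1 : (n+1:ℕ) ∈ gSet n S := (hmem (n+1)).2 (Or.inl rfl)
        have hodd : ∀ i, 1 ≤ i → i ≤ m → (2*i-1 ∈ gSet n S ↔ i ∈ S) := by
          intro i hi1 hi2
          rw [hmem]
          constructor
          · rintro (h | ⟨j, hjS, h | h⟩)
            · omega
            · have := hSsub' j hjS
              have : j = i := by omega
              exact this ▸ hjS
            · have := hSsub' j hjS; omega
          · intro h; exact Or.inr ⟨i, h, Or.inl rfl⟩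
        have heven : ∀ i, 1 ≤ i → i ≤ m → (2*i ∈ gSet n S ↔ i ∈ S) := by
          intro i hi1 hi2
          rw [hmem]
          constructor
          · rintro (h | ⟨j, hjS, h | h⟩)
            · omega
            · have := hSsub' j hjS; omega
            · have : j = i := by omega
              exact this ▸ hjS
          · intro h; exact Or.inr ⟨i, h, Or.inr rfl⟩
        refine ⟨?_, ?_, ?_⟩
        · constructor
          · intro h; exact absurd h h0
          · rintro (h | h)
            · exfalso
              obtain ⟨j, hjIcc, hjS⟩ : ∃ j, j ∈ Finset.Icc 1 (n/2) ∧ j ∉ S := by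
                by_contra hc
                push_neg at hc
                exact hfull (Finset.Subset.antisymm hSsub (fun j hj => hc j hj))
              simp only [Finset.mem_Icc] at hjIcc
              have h2j : (2*j:ℕ) ∈ gSet n S := h (by
                simp only [Finset.coe_Icc, Set.mem_Icc]; omega)
              exact hjS ((heven j (by omega) (by omega)).1 h2j)
            · exact absurd hn1 h
        · intro i hi1 hi2
          rw [hodd i hi1 hi2, heven i hi1 hi2]
          constructor
          · constructor
            · intro h; exact Or.inr h
            · rintro (h | h)
              · exact absurd h h0
              · exact h
          · constructor
            · intro h; exact Or.inr h
            · rintro (h | h)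
              · exact absurd h h0
              · exact h
        · intro a ha
          rcases (hmem a).1 ha with h | ⟨i, hiS, h | h⟩
          · omega
          · have := hSsub' i hiS; omega
          · have := hSsub' i hiS; omega


/-- for even `n ≥ 2`, the program `P_{4_n}` has exactly `2^{n/2} + 1`
supported models and exactly one stable model, namely `{a₀, a₁, …, a_n}`. -/
theorem stmt15 (n : ℕ) (hn : Even n) (h2 : 2 ≤ n) :
    {I : Set ℕ | SuppModel (P4 n) I}.ncard = 2 ^ (n / 2) + 1 ∧
    {I : Set ℕ | StableModel (P4 n) I} = {Set.Icc 0 n} := by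
  obtain ⟨m, hmm⟩ := hn
  have hm : n = 2 * m := by omega
  have h1 : 1 ≤ m := by omega
  have hm2 : n / 2 = m := by omega
  refine ⟨?_, stable_char n m hm h1⟩
  rw [supp_set_eq n m hm h1]
  have hsub' : ∀ S ∈ ((Finset.Icc 1 (n/2)).powerset : Finset (Finset ℕ)),
      ∀ i ∈ S, 1 ≤ i ∧ i ≤ n / 2 := by
    intro S hS i hi
    have := Finset.mem_powerset.1 hS hi
    simp only [Finset.mem_Icc] at this
    exact this
  have hnot : Set.Icc 0 (n+1) ∉
      gSet n '' (((Finset.Icc 1 (n/2)).powerset : Finset (Finset ℕ)) : Set (Finset ℕ)) := by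
    rintro ⟨S, hS, hEq⟩
    by_cases hfull : S = Finset.Icc 1 (n/2)
    · subst hfull
      rw [gset_full] at hEq
      have : (n+1:ℕ) ∈ Set.Icc 0 n := hEq ▸ (by simp : (n+1:ℕ) ∈ Set.Icc 0 (n+1))
      simp only [Set.mem_Icc] at this
      omega
    · have h0 : (0:ℕ) ∈ gSet n S := hEq ▸ (by simp : (0:ℕ) ∈ Set.Icc 0 (n+1))
      rcases (mem_gset_nonfull n S hfull 0).1 h0 with h | ⟨i, hiS, h | h⟩
      · omega
      · have := (hsub' S (Finset.mem_coe.1 hS) i hiS).1; omega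
      · have := (hsub' S (Finset.mem_coe.1 hS) i hiS).1; omega
  have hinj : Set.InjOn (gSet n)
      (((Finset.Icc 1 (n/2)).powerset : Finset (Finset ℕ)) : Set (Finset ℕ)) := by
    intro S hS T hT hEq
    by_cases hfS : S = Finset.Icc 1 (n/2) <;> by_cases hfT : T = Finset.Icc 1 (n/2)
    · rw [hfS, hfT]
    · exfalso
      rw [hfS, gset_full] at hEq
      have : (n+1:ℕ) ∈ Set.Icc 0 n := hEq ▸ (mem_gset_nonfull n T hfT (n+1)).2 (Or.inl rfl)
      simp only [Set.mem_Icc] at this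
      omega
    · exfalso
      rw [hfT, gset_full] at hEq
      have : (n+1:ℕ) ∈ Set.Icc 0 n := hEq ▸ (mem_gset_nonfull n S hfS (n+1)).2 (Or.inl rfl)
      simp only [Set.mem_Icc] at this
      omega
    · ext i
      constructor
      · intro hi
        have hib := hsub' S (Finset.mem_coe.1 hS) i hi
        have h2i : (2*i:ℕ) ∈ gSet n T :=
          hEq ▸ (mem_gset_nonfull n S hfS (2*i)).2 (Or.inr ⟨i, hi, Or.inr rfl⟩)
        rcases (mem_gset_nonfull n T hfT (2*i)).1 h2i with h | ⟨j, hjT, h | h⟩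
        · omega
        · have := (hsub' T (Finset.mem_coe.1 hT) j hjT).1; omega
        · have : j = i := by omega
          exact this ▸ hjT
      · intro hi
        have hib := hsub' T (Finset.mem_coe.1 hT) i hi
        have h2i : (2*i:ℕ) ∈ gSet n S :=
          hEq ▸ (mem_gset_nonfull n T hfT (2*i)).2 (Or.inr ⟨i, hi, Or.inr rfl⟩)
        rcases (mem_gset_nonfull n S hfS (2*i)).1 h2i with h | ⟨j, hjS, h | h⟩
        · omega
        · have := (hsub' S (Finset.mem_coe.1 hS) j hjS).1; omega
        · have : j = i := by omega
          exact this ▸ hjS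
  rw [Set.ncard_insert_of_notMem hnot ((Finset.finite_toSet _).image _),
    Set.ncard_image_of_injOn hinj, Set.ncard_coe_finset, Finset.card_powerset,
    Nat.card_Icc]
  simp
end
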